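/- Fix a probability density π_b with full support, a bounded measurable function Q, and λ > 0. Among probability densities π, the functional E_{a∼π}[Q(a)] − λ·KL(π_b, π) is maximized by π(a) = π_b(a)/(Z − Q(a)/λ), where Z ∈ ℝ is the unique normalizing constant with Z > sup_a Q(a)/λ making π integrate to 1. -/

import Mathlib

/-!
Write `g a = Z - Q a / λ`, so that the candidate is `π⋆ = πb / g` and `KL(πb, π⋆) = ∫ πb log g`.
For any density `π`, the inequality `log x ≥ 1 - 1/x` at `x = πb / (g π)` gives the pointwise
bound `πb log (πb / π) ≥ πb log g + πb - g π`. As `λ g π = λ Z π - Q π`, integrating yields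
`∫ π Q - λ KL(πb, π) ≤ λ Z - λ - λ KL(πb, π⋆)`, and the right-hand side is the value of the
functional at `π⋆` because `∫ π⋆ Q = λ Z ∫ π⋆ - λ ∫ πb = λ Z - λ`.
-/

open MeasureTheory

section

open Real

theorem mul_log_add_sub_le_mul_log_div {p q g : ℝ} (hp : 0 < p) (hq : 0 < q) (hg : 0 < g) :
    p * log g + p - g * q ≤ p * log (p / q) := by
  have hlog : 1 - (p / (g * q))⁻¹ ≤ log (p / (g * q)) :=
    one_sub_inv_le_log_of_pos (by positivity)
  have hsplit : log (p / (g * q)) = log (p / q) - log g := by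
    rw [← log_div (by positivity) hg.ne']
    congr 1
    field_simp
  have hinv : p * (1 - (p / (g * q))⁻¹) = p - g * q := by
    field_simp
  have := mul_le_mul_of_nonneg_left hlog hp.le
  rw [hinv, hsplit] at this
  linarith

variable {α : Type*} [MeasurableSpace α] {μ : Measure α}

theorem integral_mul_log_add_sub_le {p q g : α → ℝ}
    (hp : ∀ a, 0 < p a) (hq : ∀ a, 0 < q a) (hg : ∀ a, 0 < g a) (hp_int : Integrable p μ)
    (hpg_int : Integrable (fun a => p a * log (g a)) μ)
    (hpq_int : Integrable (fun a => p a * log (p a / q a)) μ)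
    (hgq_int : Integrable (fun a => g a * q a) μ) :
    (∫ a, p a * log (g a) ∂μ) + (∫ a, p a ∂μ) - (∫ a, g a * q a ∂μ)
      ≤ ∫ a, p a * log (p a / q a) ∂μ := by
  have := integral_mono ((hpg_int.add hp_int).sub hgq_int) hpq_int
    fun a => mul_log_add_sub_le_mul_log_div (hp a) (hq a) (hg a)
  rwa [integral_sub' (hpg_int.add hp_int) hgq_int, integral_add' hpg_int hp_int] at this

theorem integrable_mul_log_of_le {p g : α → ℝ} {C : ℝ} (hp_int : Integrable p μ)
    (hp_div_int : Integrable (fun a => p a / g a) μ) (hg : AEMeasurable g μ)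
    (hp : ∀ a, 0 ≤ p a) (hg_pos : ∀ a, 0 < g a) (hg_le : ∀ a, g a ≤ C) :
    Integrable (fun a => p a * log (g a)) μ := by
  refine integrable_of_le_of_le (g₁ := fun a => p a - p a / g a) (g₂ := fun a => p a * log C)
    (hp_int.aestronglyMeasurable.mul hg.log.aestronglyMeasurable) (ae_of_all _ fun a => ?_)
    (ae_of_all _ fun a => ?_) (hp_int.sub hp_div_int) (hp_int.mul_const _)
  · have hlog : 1 - (g a)⁻¹ ≤ log (g a) := one_sub_inv_le_log_of_pos (hg_pos a)
    calc p a - p a / g a = p a * (1 - (g a)⁻¹) := by ring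
      _ ≤ p a * log (g a) := mul_le_mul_of_nonneg_left hlog (hp a)
  · exact mul_le_mul_of_nonneg_left (log_le_log (hg_pos a) (hg_le a)) (hp a)

theorem integral_div_sub_div_mul_eq {p Q : α → ℝ} {lam Z : ℝ} (hlam : lam ≠ 0)
    (hg : ∀ a, Z - Q a / lam ≠ 0)
    (hp_int : Integrable p μ) (hpg_int : Integrable (fun a => p a / (Z - Q a / lam)) μ) :
    ∫ a, p a / (Z - Q a / lam) * Q a ∂μ
      = lam * Z * (∫ a, p a / (Z - Q a / lam) ∂μ) - lam * ∫ a, p a ∂μ := by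
  have hpoint : ∀ a, p a / (Z - Q a / lam) * Q a
      = lam * Z * (p a / (Z - Q a / lam)) - lam * p a := by
    intro a
    have hQ : Q a = lam * Z - lam * (Z - Q a / lam) := by field_simp; ring
    calc p a / (Z - Q a / lam) * Q a
        = p a / (Z - Q a / lam) * (lam * Z - lam * (Z - Q a / lam)) := by rw [← hQ]
      _ = _ := by
        have hga := hg a
        generalize Z - Q a / lam = g at hga ⊢
        field_simp
  simp only [hpoint]
  rw [integral_sub (hpg_int.const_mul _) (hp_int.const_mul _), integral_const_mul,
    integral_const_mul]

end

theorem reverse_kl_regularized_max_general {α : Type} [MeasurableSpace α] (μ : Measure α)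
    (πb : α → ℝ) (hπb_pos : ∀ a, 0 < πb a)
    (hπb_norm : ∫ a, πb a ∂μ = 1)
    (Q : α → ℝ) (hQ_meas : Measurable Q) (B : ℝ) (hQ_bdd : ∀ a, |Q a| ≤ B)
    (lam : ℝ) (hlam : 0 < lam)
    (Z : ℝ) (hZ_gt : ∀ a, Q a / lam < Z)
    (hZ_norm : ∫ a, πb a / (Z - Q a / lam) ∂μ = 1)
    (π : α → ℝ) (hπ_pos : ∀ a, 0 < π a)
    (hπ_norm : ∫ a, π a ∂μ = 1)
    (hπQ_int : Integrable (fun a => π a * Q a) μ)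
    (hπKL_int : Integrable (fun a => πb a * Real.log (πb a / π a)) μ) :
    (∫ a, π a * Q a ∂μ) - lam * (∫ a, πb a * Real.log (πb a / π a) ∂μ)
      ≤ (∫ a, (πb a / (Z - Q a / lam)) * Q a ∂μ)
        - lam * (∫ a, πb a * Real.log (πb a / (πb a / (Z - Q a / lam))) ∂μ) := by
  have hg_pos : ∀ a, 0 < Z - Q a / lam := fun a => sub_pos.2 (hZ_gt a)
  have hg_le : ∀ a, Z - Q a / lam ≤ Z + B / lam := fun a => by
    have := div_le_div_of_nonneg_right (abs_le.1 (hQ_bdd a)).1 hlam.le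
    rw [neg_div] at this
    linarith
  have hπb_int : Integrable πb μ := .of_integral_ne_zero (by simp [hπb_norm])
  have hπ_int : Integrable π μ := .of_integral_ne_zero (by simp [hπ_norm])
  have hπs_int : Integrable (fun a => πb a / (Z - Q a / lam)) μ :=
    .of_integral_ne_zero (by simp [hZ_norm])
  have hlog_int : Integrable (fun a => πb a * Real.log (Z - Q a / lam)) μ :=
    integrable_mul_log_of_le hπb_int hπs_int
      ((hQ_meas.div_const lam).const_sub Z).aemeasurable (fun a => (hπb_pos a).le) hg_pos hg_le
  have hgπ_eq : (fun a => (Z - Q a / lam) * π a) = fun a => Z * π a - π a * Q a / lam := by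
    funext a; ring
  have hgπ_int : Integrable (fun a => (Z - Q a / lam) * π a) μ := by
    rw [hgπ_eq]; exact (hπ_int.const_mul Z).sub (hπQ_int.div_const lam)
  have hgπ : ∫ a, (Z - Q a / lam) * π a ∂μ = Z - (∫ a, π a * Q a ∂μ) / lam := by
    rw [hgπ_eq, integral_sub (hπ_int.const_mul Z) (hπQ_int.div_const lam), integral_const_mul,
      integral_div, hπ_norm, mul_one]
  have hbound := integral_mul_log_add_sub_le hπb_pos hπ_pos hg_pos hπb_int hlog_int hπKL_int hgπ_int
  rw [hgπ, hπb_norm] at hbound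
  simp only [div_div_cancel₀ (hπb_pos _).ne']
  rw [integral_div_sub_div_mul_eq hlam.ne' (fun a => (hg_pos a).ne') hπb_int hπs_int, hZ_norm,
    hπb_norm]
  have := mul_le_mul_of_nonneg_left hbound hlam.le
  rw [mul_sub, mul_sub, mul_add, mul_one, mul_div_cancel₀ _ hlam.ne'] at this
  linarith

theorem reverse_kl_regularized_max {α : Type} [MeasurableSpace α] (μ : Measure α)
    (πb : α → ℝ) (hπb_meas : Measurable πb) (hπb_pos : ∀ a, 0 < πb a)
    (hπb_int : Integrable πb μ) (hπb_norm : ∫ a, πb a ∂μ = 1)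
    (Q : α → ℝ) (hQ_meas : Measurable Q) (B : ℝ) (hQ_bdd : ∀ a, |Q a| ≤ B)
    (lam : ℝ) (hlam : 0 < lam)
    (Z : ℝ) (hZ_gt : ∀ a, Q a / lam < Z)
    (hZ_norm : ∫ a, πb a / (Z - Q a / lam) ∂μ = 1)
    -- `Z` is the unique such normalizing constant:
    (hZ_unique : ∀ Z' : ℝ, (∀ a, Q a / lam < Z') →
      (∫ a, πb a / (Z' - Q a / lam) ∂μ = 1) → Z' = Z)
    (π : α → ℝ) (hπ_meas : Measurable π) (hπ_pos : ∀ a, 0 < π a)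
    (hπ_norm : ∫ a, π a ∂μ = 1)
    (hπQ_int : Integrable (fun a => π a * Q a) μ)
    (hπKL_int : Integrable (fun a => πb a * Real.log (πb a / π a)) μ) :
    (∫ a, π a * Q a ∂μ) - lam * (∫ a, πb a * Real.log (πb a / π a) ∂μ)
      ≤ (∫ a, (πb a / (Z - Q a / lam)) * Q a ∂μ)
        - lam * (∫ a, πb a * Real.log (πb a / (πb a / (Z - Q a / lam))) ∂μ) :=
  reverse_kl_regularized_max_general μ πb hπb_pos hπb_norm Q hQ_meas B hQ_bdd lam hlam Z hZ_gt
    hZ_norm π hπ_pos hπ_norm hπQ_int hπKL_int
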